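/- arXiv:1805.00417 — 5 statements merged into one kernel-verified Lean document; each statement's English description precedes it below -/
import Mathlib

section
/- Let γ be any minimizer of ∫ c_w dγ over Γ₃(μ). Then for every point (x₁, x₂, x₃) in the support of γ there exist k ∈ {1,2} and a permutation σ of {1,2,3} such that x_{σ(1)} ∈ L^k, x_{σ(2)} ∈ C, and x_{σ(3)} ∈ R^k. -/
open MeasureTheory

noncomputable section

def Cset : Set ℝ := Set.Icc 0 (1 / 2)
def Rset (k : ℕ) : Set ℝ := Set.Icc ((3 : ℝ) ^ k) ((3 : ℝ) ^ k + 1 / 2)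
def Lset (k : ℕ) : Set ℝ := Set.Icc (-(3 : ℝ) ^ k - 1) (-(3 : ℝ) ^ k)

def muL : Measure ℝ := (1 / 2 : ENNReal) • volume.restrict (Lset 1 ∪ Lset 2)
def muC : Measure ℝ := (2 : ENNReal) • volume.restrict Cset
def muR : Measure ℝ := volume.restrict (Rset 1 ∪ Rset 2)
def mu : Measure ℝ := (1 / 3 : ENNReal) • (muL + muC + muR)

/-- The repulsive harmonic cost for three marginals on `ℝ`. -/
def cw (x : Fin 3 → ℝ) : ℝ :=
  -|x 0 - x 1| ^ 2 - |x 0 - x 2| ^ 2 - |x 1 - x 2| ^ 2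

/-- `Γ₃(μ)`: probability measures on `ℝ³` with all three marginals equal to `μ`. -/
def Gamma3 (μ : Measure ℝ) : Set (Measure (Fin 3 → ℝ)) :=
  {γ | IsProbabilityMeasure γ ∧ ∀ i : Fin 3, γ.map (fun x => x i) = μ}

/-- The (topological) support of a measure: points all of whose open neighbourhoods
have positive measure. -/
def msupp {α : Type*} [TopologicalSpace α] [MeasurableSpace α] (γ : Measure α) : Set α :=
  {x | ∀ U : Set α, IsOpen U → x ∈ U → 0 < γ U}

/-!
Since `c_w(x) = (x₁ + x₂ + x₃)² - 3 (x₁² + x₂² + x₃²)` and the second term has the same integral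
under every plan in `Γ₃(μ)`, minimizers are exactly the plans minimizing `∫ (x₁ + x₂ + x₃)² ≥ 0`.
The value `0` is attained: the segments `u ↦ (-3^k - 2u, u, 3^k + u)`, `u ∈ C`, `k = 1, 2`, averaged
over the cyclic permutations of the coordinates, give a plan in `Γ₃(μ)` concentrated on
`{x₁ + x₂ + x₃ = 0}`. So a minimizer is concentrated on zero-sum triples with coordinates in the
support of `μ` and, `μ` being atomless, with `x₁ ≠ 0`. Once sorted, such a triple lies in
`L^k × C × R^k` for some `k` by interval arithmetic; the set of triples of this shape is closed, so
it contains the support of the minimizer.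
-/

open Set
open scoped ENNReal

lemma mem_of_mem_msupp {α : Type*} [TopologicalSpace α] [MeasurableSpace α] {γ : Measure α}
    {F : Set α} (hF : IsClosed F) (hγF : ∀ᵐ y ∂γ, y ∈ F) {x : α} (hx : x ∈ msupp γ) : x ∈ F := by
  by_contra hxF
  exact (hx Fᶜ hF.isOpen_compl hxF).ne' (ae_iff.1 hγF)

lemma cw_eq_sq_sum_sub (x : Fin 3 → ℝ) : cw x = (∑ i, x i) ^ 2 - 3 * ∑ i, x i ^ 2 := by
  simp only [cw, sq_abs, Fin.sum_univ_three]
  ring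

section Marginals

variable {n : ℕ} {μ : Measure ℝ} {γ : Measure (Fin n → ℝ)}

lemma integrable_apply_sq {i : Fin n} (hμ : Integrable (fun t : ℝ => t ^ 2) μ)
    (hγ : γ.map (fun x => x i) = μ) : Integrable (fun x => x i ^ 2) γ := by
  rw [← hγ] at hμ
  exact (integrable_map_measure (continuous_pow 2).aestronglyMeasurable
    (measurable_pi_apply i).aemeasurable).1 hμ

lemma integral_apply_sq {i : Fin n} (hγ : γ.map (fun x => x i) = μ) :
    ∫ x, x i ^ 2 ∂γ = ∫ t, t ^ 2 ∂μ := by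
  rw [← hγ, integral_map (measurable_pi_apply i).aemeasurable (by fun_prop)]

lemma integrable_sq_sum (hμ : Integrable (fun t : ℝ => t ^ 2) μ)
    (hγ : ∀ i, γ.map (fun x => x i) = μ) : Integrable (fun x => (∑ i, x i) ^ 2) γ := by
  refine ((integrable_finsetSum Finset.univ fun i _ => integrable_apply_sq hμ (hγ i)).const_mul
    (n : ℝ)).mono' (by fun_prop) (ae_of_all _ fun x => ?_)
  rw [Real.norm_of_nonneg (sq_nonneg _)]
  simpa using sq_sum_le_card_mul_sum_sq (s := Finset.univ) (f := x)

end Marginals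

section Cost

variable {μ : Measure ℝ} {γ γ₀ : Measure (Fin 3 → ℝ)}

lemma integral_cw (hμ : Integrable (fun t : ℝ => t ^ 2) μ)
    (hγ : ∀ i, γ.map (fun x => x i) = μ) :
    ∫ x, cw x ∂γ = ∫ x, (∑ i, x i) ^ 2 ∂γ - 9 * ∫ t, t ^ 2 ∂μ := by
  have hsq i : Integrable (fun x => x i ^ 2) γ := integrable_apply_sq hμ (hγ i)
  simp_rw [cw_eq_sq_sum_sub]
  rw [integral_sub (integrable_sq_sum hμ hγ)
      ((integrable_finsetSum _ fun i _ => hsq i).const_mul 3), integral_const_mul,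
    integral_finsetSum _ fun i _ => hsq i]
  simp only [integral_apply_sq (hγ _), Finset.sum_const, Finset.card_univ, Fintype.card_fin,
    nsmul_eq_mul]
  ring

lemma ae_sum_eq_zero_of_integral_cw_le (hμ : Integrable (fun t : ℝ => t ^ 2) μ)
    (hγ : ∀ i, γ.map (fun x => x i) = μ) (hγ₀ : ∀ i, γ₀.map (fun x => x i) = μ)
    (hγ₀_sum : ∀ᵐ y ∂γ₀, ∑ i, y i = 0) (hle : ∫ x, cw x ∂γ ≤ ∫ x, cw x ∂γ₀) :
    ∀ᵐ y ∂γ, ∑ i, y i = 0 := by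
  have h₀ : ∫ x, (∑ i, x i) ^ 2 ∂γ₀ = 0 :=
    integral_eq_zero_of_ae (hγ₀_sum.mono fun y hy => by simp [hy])
  rw [integral_cw hμ hγ, integral_cw hμ hγ₀, h₀] at hle
  have h : ∫ x, (∑ i, x i) ^ 2 ∂γ = 0 :=
    le_antisymm (by linarith) (integral_nonneg fun _ => sq_nonneg _)
  filter_upwards [(integral_eq_zero_iff_of_nonneg (fun _ => sq_nonneg _)
    (integrable_sq_sum hμ hγ)).1 h] with y hy
  exact pow_eq_zero_iff two_ne_zero |>.1 hy

end Cost

section CyclicAverage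

variable {α : Type*} [MeasurableSpace α] {n : ℕ}

def cyclicAverage (η : Measure (Fin n → α)) : Measure (Fin n → α) :=
  (n : ℝ≥0∞)⁻¹ • ∑ j, η.map (fun x i => x (i + j))

lemma map_apply_cyclicAverage [NeZero n] (η : Measure (Fin n → α)) (i : Fin n) :
    (cyclicAverage η).map (fun x => x i) = (n : ℝ≥0∞)⁻¹ • ∑ j, η.map (fun x => x j) := by
  rw [cyclicAverage, Measure.map_smul,
    Measure.map_finset_sum' (measurable_pi_apply i).aemeasurable]
  congr 1
  refine Fintype.sum_equiv (Equiv.addLeft i) _ _ fun j => ?_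
  rw [Measure.map_map (measurable_pi_apply i) (by fun_prop)]
  rfl

lemma ae_cyclicAverage {η : Measure (Fin n → α)} {p : (Fin n → α) → Prop}
    (hp : MeasurableSet {x | p x}) (hshift : ∀ j x, p x → p (fun i => x (i + j)))
    (h : ∀ᵐ x ∂η, p x) : ∀ᵐ x ∂cyclicAverage η, p x := by
  refine Measure.ae_smul_measure ?_ _
  rw [← Measure.sum_fintype, Measure.ae_sum_iff]
  have hmeas (j : Fin n) : Measurable fun (x : Fin n → α) i => x (i + j) := by fun_prop
  exact fun j => (ae_map_iff (hmeas j).aemeasurable hp).2 (h.mono (hshift j))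

end CyclicAverage

lemma map_restrict_preimage_affine {a : ℝ} (ha : a ≠ 0) (b : ℝ) {s : Set ℝ}
    (hs : MeasurableSet s) :
    (volume.restrict ((fun u => a * u + b) ⁻¹' s)).map (fun u => a * u + b) =
      ENNReal.ofReal |a⁻¹| • volume.restrict s := by
  have h : (fun u : ℝ => a * u + b) = (· + b) ∘ (a * ·) := rfl
  rw [← Measure.restrict_map (by fun_prop) hs, h, ← Measure.map_map (by fun_prop) (by fun_prop),
    Real.map_volume_mul_left ha, Measure.map_smul,
    Measure.IsAddRightInvariant.map_add_right_eq_self, Measure.restrict_smul]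

lemma Lset_one : Lset 1 = Icc (-4) (-3) := by norm_num [Lset]

lemma Lset_two : Lset 2 = Icc (-10) (-9) := by norm_num [Lset]

lemma Rset_one : Rset 1 = Icc 3 (7 / 2) := by norm_num [Rset]

lemma Rset_two : Rset 2 = Icc 9 (19 / 2) := by norm_num [Rset]

lemma disjoint_Lset_one_two : Disjoint (Lset 1) (Lset 2) := by
  rw [Lset_one, Lset_two]
  exact Set.disjoint_left.2 fun t h₁ h₂ => by linarith [h₁.1, h₂.2]

lemma disjoint_Rset_one_two : Disjoint (Rset 1) (Rset 2) := by
  rw [Rset_one, Rset_two]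
  exact Set.disjoint_left.2 fun t h₁ h₂ => by linarith [h₁.2, h₂.1]

def chain (k : ℕ) (u : ℝ) : Fin 3 → ℝ := ![-(3 : ℝ) ^ k - 2 * u, u, (3 : ℝ) ^ k + u]

lemma measurable_chain (k : ℕ) : Measurable (chain k) :=
  by unfold chain; fun_prop

lemma sum_chain (k : ℕ) (u : ℝ) : ∑ i, chain k u i = 0 := by
  simp only [chain, Fin.sum_univ_three, Matrix.cons_val_zero, Matrix.cons_val_one,
    Matrix.cons_val_two, Matrix.head_cons, Matrix.tail_cons]
  ring

lemma map_apply_map_chain (k : ℕ) (i : Fin 3) :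
    ((volume.restrict Cset).map (chain k)).map (fun x => x i) =
      (volume.restrict Cset).map (fun u => chain k u i) :=
  Measure.map_map (measurable_pi_apply i) (measurable_chain k)

lemma map_chain_zero (k : ℕ) :
    ((volume.restrict Cset).map (chain k)).map (fun x => x 0) =
      (1 / 2 : ℝ≥0∞) • volume.restrict (Lset k) := by
  have hpre : (fun u => -2 * u + -(3 : ℝ) ^ k) ⁻¹' Lset k = Cset := by
    ext u
    simp only [Lset, Cset, mem_preimage, mem_Icc]
    constructor <;> intro h <;> constructor <;> linarith [h.1, h.2]
  have hf : (fun u => chain k u 0) = fun u => -2 * u + -(3 : ℝ) ^ k := by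
    funext u
    simp only [chain, Matrix.cons_val_zero]
    ring
  rw [map_apply_map_chain, hf, ← hpre,
    map_restrict_preimage_affine (by norm_num) _ (s := Lset k) measurableSet_Icc,
    show |(-2 : ℝ)⁻¹| = 2⁻¹ by norm_num, ENNReal.ofReal_inv_of_pos two_pos, ENNReal.ofReal_ofNat,
    one_div]

lemma map_chain_one (k : ℕ) :
    ((volume.restrict Cset).map (chain k)).map (fun x => x 1) = volume.restrict Cset := by
  rw [map_apply_map_chain]
  exact Measure.map_id

lemma map_chain_two (k : ℕ) :
    ((volume.restrict Cset).map (chain k)).map (fun x => x 2) = volume.restrict (Rset k) := by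
  have hpre : (fun u => 1 * u + (3 : ℝ) ^ k) ⁻¹' Rset k = Cset := by
    ext u
    simp only [Rset, Cset, mem_preimage, mem_Icc]
    constructor <;> intro h <;> constructor <;> linarith [h.1, h.2]
  have hf : (fun u => chain k u 2) = fun u => 1 * u + (3 : ℝ) ^ k := by
    funext u
    simp only [chain, Matrix.cons_val_two, Matrix.tail_cons, Matrix.head_cons]
    ring
  rw [map_apply_map_chain, hf, ← hpre,
    map_restrict_preimage_affine one_ne_zero _ (s := Rset k) measurableSet_Icc]
  simp

def chainCoupling : Measure (Fin 3 → ℝ) :=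
  (volume.restrict Cset).map (chain 1) + (volume.restrict Cset).map (chain 2)

lemma map_apply_chainCoupling :
    ∑ i, chainCoupling.map (fun x => x i) = muL + muC + muR := by
  simp only [Fin.sum_univ_three, chainCoupling, Measure.map_add _ _ (measurable_pi_apply _),
    map_chain_zero, map_chain_one, map_chain_two, muL, muC, muR, two_smul, ← smul_add,
    Measure.restrict_union disjoint_Lset_one_two measurableSet_Icc,
    Measure.restrict_union disjoint_Rset_one_two measurableSet_Icc]

lemma measure_univ_chainCoupling : chainCoupling univ = 1 := by
  simp only [chainCoupling, Measure.add_apply,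
    Measure.map_apply (measurable_chain _) MeasurableSet.univ, preimage_univ,
    Measure.restrict_apply_univ, Cset, Real.volume_Icc]
  rw [← ENNReal.ofReal_add (by norm_num) (by norm_num)]
  norm_num

def zeroSumCoupling : Measure (Fin 3 → ℝ) := cyclicAverage chainCoupling

lemma measurableSet_sum_eq_zero {n : ℕ} : MeasurableSet {x : Fin n → ℝ | ∑ i, x i = 0} :=
  measurableSet_eq_fun (by fun_prop) measurable_const

lemma ae_sum_zeroSumCoupling : ∀ᵐ y ∂zeroSumCoupling, ∑ i, y i = 0 := by
  refine ae_cyclicAverage measurableSet_sum_eq_zero (fun j x hx => ?_) ?_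
  · rw [← hx]
    exact Equiv.sum_comp (Equiv.addRight j) x
  · have h k : ∀ᵐ y ∂(volume.restrict Cset).map (chain k), ∑ i, y i = 0 :=
      (ae_map_iff (measurable_chain k).aemeasurable measurableSet_sum_eq_zero).2
        (ae_of_all _ (sum_chain k))
    exact ae_add_measure_iff.2 ⟨h 1, h 2⟩

lemma map_apply_zeroSumCoupling (i : Fin 3) : zeroSumCoupling.map (fun x => x i) = mu := by
  rw [zeroSumCoupling, map_apply_cyclicAverage, map_apply_chainCoupling, mu]
  norm_num

instance : IsProbabilityMeasure mu := by
  constructor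
  rw [mu, ← map_apply_chainCoupling]
  simp [Measure.map_apply (measurable_pi_apply _) MeasurableSet.univ, measure_univ_chainCoupling,
    ENNReal.inv_mul_cancel]

lemma zeroSumCoupling_mem_Gamma3 : zeroSumCoupling ∈ Gamma3 mu := by
  refine ⟨⟨?_⟩, map_apply_zeroSumCoupling⟩
  rw [← preimage_univ (f := fun x : Fin 3 → ℝ => x 0),
    ← Measure.map_apply (measurable_pi_apply 0) MeasurableSet.univ, map_apply_zeroSumCoupling,
    measure_univ]

def suppMu : Set ℝ := (Lset 1 ∪ Lset 2) ∪ Cset ∪ (Rset 1 ∪ Rset 2)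

lemma isCompact_suppMu : IsCompact suppMu :=
  ((isCompact_Icc.union isCompact_Icc).union isCompact_Icc).union
    (isCompact_Icc.union isCompact_Icc)

lemma ae_mu_of_ae_restrict {p : ℝ → Prop} (h : ∀ᵐ t ∂volume.restrict suppMu, p t) :
    ∀ᵐ t ∂mu, p t := by
  have hs {s : Set ℝ} (hs : s ⊆ suppMu) : ∀ᵐ t ∂volume.restrict s, p t :=
    ae_mono (Measure.restrict_mono hs le_rfl) h
  unfold mu muL muC muR
  refine Measure.ae_smul_measure
    (ae_add_measure_iff.2 ⟨ae_add_measure_iff.2 ⟨?_, ?_⟩, ?_⟩) (1 / 3 : ℝ≥0∞)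
  · exact Measure.ae_smul_measure (hs (subset_union_left.trans subset_union_left)) (1 / 2 : ℝ≥0∞)
  · exact Measure.ae_smul_measure (hs (subset_union_right.trans subset_union_left)) (2 : ℝ≥0∞)
  · exact hs subset_union_right

lemma ae_mem_suppMu : ∀ᵐ t ∂mu, t ∈ suppMu :=
  ae_mu_of_ae_restrict (ae_restrict_mem isCompact_suppMu.isClosed.measurableSet)

lemma integrable_sq_mu : Integrable (fun t : ℝ => t ^ 2) mu := by
  rw [← Measure.restrict_eq_self_of_ae_mem ae_mem_suppMu]
  exact (continuous_pow 2).continuousOn.integrableOn_compact isCompact_suppMu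

lemma exists_lcr_of_le {a b c : ℝ} (ha : a ∈ suppMu) (hb : b ∈ suppMu) (hc : c ∈ suppMu)
    (hab : a ≤ b) (hbc : b ≤ c) (hsum : a + b + c = 0) (hneg : a < 0) :
    ∃ k ∈ ({1, 2} : Set ℕ), a ∈ Lset k ∧ b ∈ Cset ∧ c ∈ Rset k := by
  have h : (a ∈ Lset 1 ∧ b ∈ Cset ∧ c ∈ Rset 1) ∨ (a ∈ Lset 2 ∧ b ∈ Cset ∧ c ∈ Rset 2) := by
    simp only [suppMu, Lset_one, Lset_two, Rset_one, Rset_two, Cset, mem_union] at ha hb hc ⊢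
    rcases ha with ((ha | ha) | ha) | ha | ha <;> rcases hb with ((hb | hb) | hb) | hb | hb <;>
      rcases hc with ((hc | hc) | hc) | hc | hc <;>
      first
        | exact Or.inl ⟨ha, hb, hc⟩
        | exact Or.inr ⟨ha, hb, hc⟩
        | (exfalso; linarith [ha.1, ha.2, hb.1, hb.2, hc.1, hc.2])
  rcases h with h | h
  exacts [⟨1, by simp, h⟩, ⟨2, by simp, h⟩]

def lcrTriples : Set (Fin 3 → ℝ) :=
  {x | ∃ k ∈ ({1, 2} : Set ℕ), ∃ σ : Equiv.Perm (Fin 3),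
    x (σ 0) ∈ Lset k ∧ x (σ 1) ∈ Cset ∧ x (σ 2) ∈ Rset k}

lemma isClosed_lcrTriples : IsClosed lcrTriples := by
  have h : lcrTriples = ⋃ k ∈ ({1, 2} : Set ℕ), ⋃ σ : Equiv.Perm (Fin 3),
      (fun x => x (σ 0)) ⁻¹' Lset k ∩
        ((fun x => x (σ 1)) ⁻¹' Cset ∩ (fun x => x (σ 2)) ⁻¹' Rset k) := by
    ext x
    simp [lcrTriples]
  rw [h]
  refine (toFinite _).isClosed_biUnion fun k _ => isClosed_iUnion_of_finite fun σ => ?_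
  exact (isClosed_Icc.preimage (continuous_apply _)).inter
    ((isClosed_Icc.preimage (continuous_apply _)).inter
      (isClosed_Icc.preimage (continuous_apply _)))

lemma mem_lcrTriples {y : Fin 3 → ℝ} (hS : ∀ i, y i ∈ suppMu) (hsum : ∑ i, y i = 0)
    (h0 : y 0 ≠ 0) : y ∈ lcrTriples := by
  set σ := Tuple.sort y
  have hmono : Monotone (y ∘ σ) := Tuple.monotone_sort y
  have h01 : y (σ 0) ≤ y (σ 1) := hmono (by decide)
  have h12 : y (σ 1) ≤ y (σ 2) := hmono (by decide)
  have hσsum : y (σ 0) + y (σ 1) + y (σ 2) = 0 := by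
    rw [← hsum, ← Equiv.sum_comp σ, Fin.sum_univ_three]
  have hneg : y (σ 0) < 0 := by
    by_contra! hnn
    have hzero j : y (σ j) = 0 := by
      fin_cases j <;> simp only [Fin.zero_eta, Fin.mk_one, Fin.reduceFinMk] <;> linarith
    exact h0 (by simpa using hzero (σ.symm 0))
  obtain ⟨k, hk, hL, hC, hR⟩ := exists_lcr_of_le (hS _) (hS _) (hS _) h01 h12 hσsum hneg
  exact ⟨k, hk, σ, hL, hC, hR⟩

theorem support_structure_of_minimizers
    (γ : Measure (Fin 3 → ℝ)) (hγ : γ ∈ Gamma3 mu)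
    (hmin : ∀ γ' ∈ Gamma3 mu, ∫ x, cw x ∂γ ≤ ∫ x, cw x ∂γ')
    (x : Fin 3 → ℝ) (hx : x ∈ msupp γ) :
    ∃ k ∈ ({1, 2} : Set ℕ), ∃ σ : Equiv.Perm (Fin 3),
      x (σ 0) ∈ Lset k ∧ x (σ 1) ∈ Cset ∧ x (σ 2) ∈ Rset k := by
  have hmarg (i : Fin 3) {p : ℝ → Prop} (hp : ∀ᵐ t ∂mu, p t) : ∀ᵐ y ∂γ, p (y i) :=
    ae_of_ae_map (measurable_pi_apply i).aemeasurable (by rwa [hγ.2 i])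
  have hsum : ∀ᵐ y ∂γ, ∑ i, y i = 0 :=
    ae_sum_eq_zero_of_integral_cw_le integrable_sq_mu hγ.2 zeroSumCoupling_mem_Gamma3.2
      ae_sum_zeroSumCoupling (hmin _ zeroSumCoupling_mem_Gamma3)
  have hS : ∀ᵐ y ∂γ, ∀ i, y i ∈ suppMu := ae_all_iff.2 fun i => hmarg i ae_mem_suppMu
  have h0 : ∀ᵐ y ∂γ, y 0 ≠ 0 :=
    hmarg 0 (ae_mu_of_ae_restrict (ae_restrict_of_ae (Measure.ae_ne volume 0)))
  refine mem_of_mem_msupp isClosed_lcrTriples ?_ hx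
  filter_upwards [hS, hsum, h0] with y using mem_lcrTriples

end
end

section
/- Let μ₁,…,μ_N be Borel probability measures on ℝ^d with finite first moments, let h : ℝ^d → [0,∞) be convex, and set c_h(x₁,…,x_N) = h(x₁ + ⋯ + x_N). If γ ∈ Γ(μ₁,…,μ_N) is concentrated on a hyperplane {(x₁,…,x_N) : x₁ + ⋯ + x_N = k} for some k ∈ ℝ^d (i.e., its support is contained in this set), then γ minimizes ∫ c_h dγ over Γ(μ₁,…,μ_N). -/
open MeasureTheory

noncomputable section

abbrev Euc (d : ℕ) := EuclideanSpace ℝ (Fin d)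

/-- `Γ(μ₁, …, μ_N)`: probability measures on `(ℝ^d)^N` whose `i`-th marginal is `μ i`. -/
def Plans (d N : ℕ) (μ : Fin N → Measure (Euc d)) : Set (Measure (Fin N → Euc d)) :=
  {γ | IsProbabilityMeasure γ ∧ ∀ i : Fin N, γ.map (fun x => x i) = μ i}

/-!
Every plan `γ'` has the same barycentre `∫ ∑ xᵢ dγ' = ∑ᵢ ∫ y dμᵢ`, since it only depends on the
marginals. For the plan `γ` concentrated on `{∑ xᵢ = k}` this barycentre is `k`, so the cost of `γ`
is `h k`, which by Jensen's inequality is at most `∫ h (∑ xᵢ) dγ'` for every plan `γ'`.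
-/

section Support

variable {α : Type*} [TopologicalSpace α] [MeasurableSpace α]

theorem msupp_eq_support (γ : Measure α) : msupp γ = γ.support := by
  ext x
  simp only [msupp, Measure.support_eq_forall_isOpen, Set.mem_ofPred_eq]
  exact forall_congr' fun U => forall_comm

theorem ae_mem_of_msupp_subset [HereditarilyLindelofSpace α] {γ : Measure α} {s : Set α}
    (hs : msupp γ ⊆ s) : ∀ᵐ x ∂γ, x ∈ s :=
  Filter.mem_of_superset Measure.support_mem_ae (msupp_eq_support γ ▸ hs)

end Support

section Marginals

variable {ι E : Type*} [NormedAddCommGroup E] [MeasurableSpace E]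
  {γ : Measure (ι → E)} {μ : ι → Measure E}

theorem integrable_eval_of_map_eq (hγ : ∀ i, γ.map (fun x => x i) = μ i)
    (hμ : ∀ i, Integrable id (μ i)) (i : ι) : Integrable (fun x => x i) γ :=
  ((hγ i).symm ▸ hμ i).comp_measurable (measurable_pi_apply i)

variable [Fintype ι] [NormedSpace ℝ E]

theorem integral_sum_eq_sum_integral_of_map_eq (hγ : ∀ i, γ.map (fun x => x i) = μ i)
    (hμ : ∀ i, Integrable id (μ i)) : ∫ x, ∑ i, x i ∂γ = ∑ i, ∫ y, y ∂(μ i) := by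
  rw [integral_finsetSum _ fun i _ => integrable_eval_of_map_eq hγ hμ i]
  refine Finset.sum_congr rfl fun i _ => ?_
  rw [← hγ i, integral_map (measurable_pi_apply i).aemeasurable]
  exact (hγ i).symm ▸ (hμ i).aestronglyMeasurable

end Marginals

theorem ConvexOn.ofReal_map_integral_le_lintegral {α E : Type*} [MeasurableSpace α]
    [NormedAddCommGroup E] [NormedSpace ℝ E] [CompleteSpace E] {ν : Measure α}
    [IsProbabilityMeasure ν] {h : E → ℝ} (hconv : ConvexOn ℝ Set.univ h) (hcont : Continuous h)
    (hpos : ∀ x, 0 ≤ h x) {f : α → E} (hf : Integrable f ν) :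
    ENNReal.ofReal (h (∫ x, f x ∂ν)) ≤ ∫⁻ x, ENNReal.ofReal (h (f x)) ∂ν := by
  by_cases hfin : ∫⁻ x, ENNReal.ofReal (h (f x)) ∂ν = ⊤
  · exact hfin ▸ le_top
  have hpos_ae : 0 ≤ᵐ[ν] fun x => h (f x) := Filter.Eventually.of_forall fun x => hpos (f x)
  have hhf : Integrable (fun x => h (f x)) ν :=
    ⟨hcont.comp_aestronglyMeasurable hf.1,
      (hasFiniteIntegral_iff_ofReal hpos_ae).mpr (lt_top_iff_ne_top.mpr hfin)⟩
  rw [← ofReal_integral_eq_lintegral_ofReal hhf hpos_ae]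
  exact ENNReal.ofReal_le_ofReal <| hconv.map_integral_le hcont.continuousOn isClosed_univ
    (Filter.Eventually.of_forall fun x => Set.mem_univ _) hf hhf

theorem concentrated_on_hyperplane_implies_optimal_general
    (d N : ℕ) (μ : Fin N → Measure (Euc d))
    (hmom : ∀ i, Integrable (fun x => ‖x‖) (μ i))
    (h : Euc d → ℝ) (hconv : ConvexOn ℝ Set.univ h) (hpos : ∀ x, 0 ≤ h x)
    (γ : Measure (Fin N → Euc d)) (hγ : γ ∈ Plans d N μ)
    (k : Euc d) (hsupp : msupp γ ⊆ {x : Fin N → Euc d | ∑ i, x i = k}) :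
    ∀ γ' ∈ Plans d N μ,
      ∫⁻ x, ENNReal.ofReal (h (∑ i, x i)) ∂γ ≤ ∫⁻ x, ENNReal.ofReal (h (∑ i, x i)) ∂γ' := by
  rintro γ' ⟨hγ'prob, hγ'marg⟩
  obtain ⟨hγprob, hγmarg⟩ := hγ
  have hμ : ∀ i, Integrable id (μ i) := fun i =>
    (integrable_norm_iff aestronglyMeasurable_id).mp (hmom i)
  have hsum : ∀ᵐ x ∂γ, ∑ i, x i = k := ae_mem_of_msupp_subset hsupp
  have hbar : ∫ x, ∑ i, x i ∂γ' = k := by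
    rw [integral_sum_eq_sum_integral_of_map_eq hγ'marg hμ,
      ← integral_sum_eq_sum_integral_of_map_eq hγmarg hμ, integral_congr_ae hsum,
      integral_const, probReal_univ, one_smul]
  calc ∫⁻ x, ENNReal.ofReal (h (∑ i, x i)) ∂γ
      = ∫⁻ _, ENNReal.ofReal (h k) ∂γ := lintegral_congr_ae <| hsum.mono fun _ hx => by simp only [hx]
    _ = ENNReal.ofReal (h (∫ x, ∑ i, x i ∂γ')) := by
      rw [lintegral_const, measure_univ, mul_one, hbar]
    _ ≤ _ := hconv.ofReal_map_integral_le_lintegral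
      (continuousOn_univ.mp (hconv.continuousOn isOpen_univ)) hpos
      (integrable_finsetSum _ fun i _ => integrable_eval_of_map_eq hγ'marg hμ i)

theorem concentrated_on_hyperplane_implies_optimal
    (d N : ℕ) (μ : Fin N → Measure (Euc d))
    (hprob : ∀ i, IsProbabilityMeasure (μ i))
    (hmom : ∀ i, Integrable (fun x => ‖x‖) (μ i))
    (h : Euc d → ℝ) (hconv : ConvexOn ℝ Set.univ h) (hpos : ∀ x, 0 ≤ h x)
    (γ : Measure (Fin N → Euc d)) (hγ : γ ∈ Plans d N μ)
    (k : Euc d) (hsupp : msupp γ ⊆ {x : Fin N → Euc d | ∑ i, x i = k}) :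
    ∀ γ' ∈ Plans d N μ,
      ∫⁻ x, ENNReal.ofReal (h (∑ i, x i)) ∂γ ≤ ∫⁻ x, ENNReal.ofReal (h (∑ i, x i)) ∂γ' :=
  concentrated_on_hyperplane_implies_optimal_general d N μ hmom h hconv hpos γ hγ k hsupp
end
end

section
/- Let μ₁,…,μ_N be Borel probability measures on ℝ^d with finite first moments, let h : ℝ^d → [0,∞) be strictly convex, and set c_h(x₁,…,x_N) = h(x₁ + ⋯ + x_N). Assume there exists γ ∈ Γ(μ₁,…,μ_N) whose support is contained in {(x₁,…,x_N) : x₁ + ⋯ + x_N = k} for some k ∈ ℝ^d. Then: (i) necessarily k = Σ_{j=1}^N ∫ x dμ_j(x); and (ii) a plan γ̃ ∈ Γ(μ₁,…,μ_N) minimizes ∫ c_h dγ̃ over Γ(μ₁,…,μ_N) if and only if the support of γ̃ is contained in {(x₁,…,x_N) : x₁ + ⋯ + x_N = k}. -/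
/-!
All plans share the marginals `μⱼ`, so under every plan the mean of `x₁ + ⋯ + x_N` is
`∑ⱼ ∫ x dμⱼ`; under `γ`, which is concentrated on `{x₁ + ⋯ + x_N = k}`, it is `k`. Jensen's
inequality bounds every cost below by `h k`, a bound that `γ` attains. By the equality case of
Jensen's inequality for strictly convex `h`, a plan attains it exactly when `x₁ + ⋯ + x_N` is a.e.
equal to its mean `k`, i.e. when its support lies in the closed set `{x₁ + ⋯ + x_N = k}`.
-/

open MeasureTheory

noncomputable section

section Support

variable {α : Type*} [TopologicalSpace α] [MeasurableSpace α]

theorem msupp_subset_iff_ae_mem [HereditarilyLindelofSpace α] (γ : Measure α) {C : Set α}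
    (hC : IsClosed C) : msupp γ ⊆ C ↔ ∀ᵐ x ∂γ, x ∈ C := by
  rw [msupp_eq_support]
  exact ⟨fun hsub => Filter.mem_of_superset Measure.support_mem_ae hsub,
    Measure.support_subset_of_isClosed hC⟩

end Support

section Marginals

variable {ι E : Type*} [NormedAddCommGroup E] [MeasurableSpace E] [BorelSpace E]
  [SecondCountableTopology E] {γ : Measure (ι → E)} {μ : ι → Measure E}

theorem integrable_apply_of_map_eq {i : ι} (hmarg : γ.map (fun x => x i) = μ i)
    (hμ : Integrable (fun y => y) (μ i)) : Integrable (fun x => x i) γ := by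
  rw [← hmarg] at hμ
  exact (integrable_map_measure aestronglyMeasurable_id
    (measurable_pi_apply i).aemeasurable).mp hμ

theorem integral_apply_of_map_eq [NormedSpace ℝ E] {i : ι} (hmarg : γ.map (fun x => x i) = μ i) :
    ∫ x, x i ∂γ = ∫ y, y ∂(μ i) := by
  rw [← hmarg]
  exact (integral_map (measurable_pi_apply (X := fun _ : ι => E) i).aemeasurable
    aestronglyMeasurable_id).symm

theorem integrable_sum_apply_of_map_eq [Fintype ι] (hmarg : ∀ i, γ.map (fun x => x i) = μ i)
    (hμ : ∀ i, Integrable (fun y => y) (μ i)) : Integrable (fun x => ∑ i, x i) γ :=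
  integrable_finsetSum _ fun i _ => integrable_apply_of_map_eq (hmarg i) (hμ i)

theorem integral_sum_apply_of_map_eq [Fintype ι] [NormedSpace ℝ E]
    (hmarg : ∀ i, γ.map (fun x => x i) = μ i)
    (hμ : ∀ i, Integrable (fun y => y) (μ i)) :
    ∫ x, ∑ i, x i ∂γ = ∑ i, ∫ y, y ∂(μ i) := by
  rw [integral_finsetSum _ fun i _ => integrable_apply_of_map_eq (hmarg i) (hμ i)]
  exact Finset.sum_congr rfl fun i _ => integral_apply_of_map_eq (hmarg i)

end Marginals

section Jensen

variable {Ω E : Type*} [MeasurableSpace Ω] [NormedAddCommGroup E] [NormedSpace ℝ E]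
  [CompleteSpace E] {ν : Measure Ω} [IsProbabilityMeasure ν] {f : Ω → E} {g : E → ℝ}

theorem ConvexOn.ofReal_map_integral_le_lintegral_s8 (hg : ConvexOn ℝ Set.univ g)
    (hgc : Continuous g) (hg0 : ∀ y, 0 ≤ g y) (hf : Integrable f ν) :
    ENNReal.ofReal (g (∫ x, f x ∂ν)) ≤ ∫⁻ x, ENNReal.ofReal (g (f x)) ∂ν := by
  have hgf0 : 0 ≤ᵐ[ν] fun x => g (f x) := Filter.Eventually.of_forall fun x => hg0 (f x)
  by_cases hgf : Integrable (fun x => g (f x)) ν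
  · rw [← ofReal_integral_eq_lintegral_ofReal hgf hgf0]
    exact ENNReal.ofReal_le_ofReal (hg.map_integral_le hgc.continuousOn isClosed_univ
      (Filter.Eventually.of_forall fun _ => Set.mem_univ _) hf hgf)
  · rw [← lintegral_ofReal_ne_top_iff_integrable
      (hgc.comp_aestronglyMeasurable hf.aestronglyMeasurable) hgf0, not_not] at hgf
    exact hgf ▸ le_top

theorem StrictConvexOn.lintegral_ofReal_le_iff_ae_eq (hg : StrictConvexOn ℝ Set.univ g)
    (hgc : Continuous g) (hg0 : ∀ y, 0 ≤ g y) (hf : Integrable f ν) :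
    ∫⁻ x, ENNReal.ofReal (g (f x)) ∂ν ≤ ENNReal.ofReal (g (∫ x, f x ∂ν)) ↔
      f =ᵐ[ν] Function.const Ω (∫ x, f x ∂ν) := by
  have hgf0 : 0 ≤ᵐ[ν] fun x => g (f x) := Filter.Eventually.of_forall fun x => hg0 (f x)
  constructor
  · intro hle
    have hgf : Integrable (fun x => g (f x)) ν :=
      (lintegral_ofReal_ne_top_iff_integrable
        (hgc.comp_aestronglyMeasurable hf.aestronglyMeasurable) hgf0).mp
        (ne_top_of_le_ne_top ENNReal.ofReal_ne_top hle)
    rw [← ofReal_integral_eq_lintegral_ofReal hgf hgf0, ENNReal.ofReal_le_ofReal_iff (hg0 _)]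
      at hle
    simpa only [average_eq_integral, hle.not_gt, or_false] using
      hg.ae_eq_const_or_map_average_lt hgc.continuousOn isClosed_univ
        (Filter.Eventually.of_forall fun _ => Set.mem_univ _) hf hgf
  · intro hconst
    rw [lintegral_congr_ae (hconst.mono fun x hx => by rw [hx])]
    simp

end Jensen

theorem optimality_characterization_strictly_convex_general
    (d N : ℕ) (μ : Fin N → Measure (Euc d))
    (hmom : ∀ i, Integrable (fun x => ‖x‖) (μ i))
    (h : Euc d → ℝ) (hconv : StrictConvexOn ℝ Set.univ h) (hpos : ∀ x, 0 ≤ h x)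
    (γ : Measure (Fin N → Euc d)) (hγ : γ ∈ Plans d N μ)
    (k : Euc d) (hsupp : msupp γ ⊆ {x : Fin N → Euc d | ∑ i, x i = k}) :
    k = ∑ j : Fin N, ∫ x, x ∂(μ j) ∧
    ∀ γ' ∈ Plans d N μ,
      ((∀ γ'' ∈ Plans d N μ,
          ∫⁻ x, ENNReal.ofReal (h (∑ i, x i)) ∂γ' ≤ ∫⁻ x, ENNReal.ofReal (h (∑ i, x i)) ∂γ'')
        ↔ msupp γ' ⊆ {x : Fin N → Euc d | ∑ i, x i = k}) := by
  have hμ i : Integrable (fun y => y) (μ i) :=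
    (integrable_norm_iff aestronglyMeasurable_id).mp (hmom i)
  have hclosed : IsClosed {x : Fin N → Euc d | ∑ i, x i = k} :=
    isClosed_eq (continuous_finsetSum _ fun i _ => continuous_apply i) continuous_const
  have hcont : Continuous h := continuousOn_univ.mp (hconv.convexOn.continuousOn isOpen_univ)
  have hk : k = ∑ j, ∫ x, x ∂(μ j) := by
    have := hγ.1
    rw [← integral_sum_apply_of_map_eq hγ.2 hμ,
      integral_congr_ae ((msupp_subset_iff_ae_mem γ hclosed).mp hsupp)]
    simp
  have hmean {γ'} (hγ' : γ' ∈ Plans d N μ) : ∫ x, ∑ i, x i ∂γ' = k :=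
    hk ▸ integral_sum_apply_of_map_eq hγ'.2 hμ
  have hopt {γ'} (hγ' : γ' ∈ Plans d N μ) :
      ∫⁻ x, ENNReal.ofReal (h (∑ i, x i)) ∂γ' ≤ ENNReal.ofReal (h k) ↔
        msupp γ' ⊆ {x | ∑ i, x i = k} := by
    have := hγ'.1
    rw [msupp_subset_iff_ae_mem γ' hclosed, ← hmean hγ']
    exact hconv.lintegral_ofReal_le_iff_ae_eq hcont hpos
      (integrable_sum_apply_of_map_eq hγ'.2 hμ)
  have hlower {γ'} (hγ' : γ' ∈ Plans d N μ) :
      ENNReal.ofReal (h k) ≤ ∫⁻ x, ENNReal.ofReal (h (∑ i, x i)) ∂γ' := by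
    have := hγ'.1
    rw [← hmean hγ']
    exact hconv.convexOn.ofReal_map_integral_le_lintegral_s8 hcont hpos
      (integrable_sum_apply_of_map_eq hγ'.2 hμ)
  exact ⟨hk, fun γ' hγ' => ⟨fun hmin => (hopt hγ').mp ((hmin γ hγ).trans ((hopt hγ).mpr hsupp)),
    fun hs γ'' hγ'' => ((hopt hγ').mpr hs).trans (hlower hγ'')⟩⟩

theorem optimality_characterization_strictly_convex
    (d N : ℕ) (μ : Fin N → Measure (Euc d))
    (hprob : ∀ i, IsProbabilityMeasure (μ i))
    (hmom : ∀ i, Integrable (fun x => ‖x‖) (μ i))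
    (h : Euc d → ℝ) (hconv : StrictConvexOn ℝ Set.univ h) (hpos : ∀ x, 0 ≤ h x)
    (γ : Measure (Fin N → Euc d)) (hγ : γ ∈ Plans d N μ)
    (k : Euc d) (hsupp : msupp γ ⊆ {x : Fin N → Euc d | ∑ i, x i = k}) :
    k = ∑ j : Fin N, ∫ x, x ∂(μ j) ∧
    ∀ γ' ∈ Plans d N μ,
      ((∀ γ'' ∈ Plans d N μ,
          ∫⁻ x, ENNReal.ofReal (h (∑ i, x i)) ∂γ' ≤ ∫⁻ x, ENNReal.ofReal (h (∑ i, x i)) ∂γ'')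
        ↔ msupp γ' ⊆ {x : Fin N → Euc d | ∑ i, x i = k}) :=
  optimality_characterization_strictly_convex_general d N μ hmom h hconv hpos γ hγ k hsupp

end
end

section
/- Let N = 2m be even and let μ = ρ·Leb^d be an absolutely continuous Borel probability measure on ℝ^d with finite second moments whose density satisfies ρ(−x) = ρ(x) for all x (in particular, any radially symmetric ρ). Then the plan γ = (x ↦ (x, −x, x, −x, …, x, −x))♯μ, i.e., the plan induced by the iterates of T(x) = −x, belongs to Γ_N(μ) and minimizes ∫ c_w dγ over Γ_N(μ). -/
open MeasureTheory

noncomputable section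

/-- The repulsive harmonic cost on `(ℝ^d)^N`. -/
def cwN (d N : ℕ) (x : Fin N → Euc d) : ℝ :=
  -∑ i : Fin N, ∑ j ∈ Finset.Ioi i, ‖x i - x j‖ ^ 2

/-- `Γ_N(μ)`: probability measures on `(ℝ^d)^N` with all `N` marginals equal to `μ`. -/
def GammaN (d N : ℕ) (μ : Measure (Euc d)) : Set (Measure (Fin N → Euc d)) :=
  {γ | IsProbabilityMeasure γ ∧ ∀ i : Fin N, γ.map (fun x => x i) = μ}

/-- The plan induced by the iterates of `T(x) = −x`: `x ↦ (x, −x, x, −x, …)`. -/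
def alternatingPlan (d N : ℕ) (μ : Measure (Euc d)) : Measure (Fin N → Euc d) :=
  μ.map (fun x => fun i : Fin N => if (i : ℕ) % 2 = 0 then x else -x)

/-!
Expanding the squares, `c_w(x) = ‖∑ xᵢ‖² - N ∑ ‖xᵢ‖²`. For any plan with marginals `μ` the
second term integrates to `-N² ∫ ‖x‖² dμ` and the first is nonnegative, so this is a lower bound
for the cost. Along `(x, -x, …, x, -x)` the sum `∑ xᵢ` vanishes since `N` is even, so the
alternating plan attains the bound; its marginals are `μ` because an even density makes `μ`
invariant under `x ↦ -x`.
-/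

lemma norm_sum_sq_eq_sum_sum_inner {ι E : Type*} [Fintype ι] [NormedAddCommGroup E]
    [InnerProductSpace ℝ E] (f : ι → E) :
    ‖∑ i, f i‖ ^ 2 = ∑ i, ∑ j, inner ℝ (f i) (f j) := by
  rw [← real_inner_self_eq_norm_sq, sum_inner]
  simp_rw [inner_sum]

lemma sum_sum_norm_sub_sq {ι E : Type*} [Fintype ι] [NormedAddCommGroup E]
    [InnerProductSpace ℝ E] (f : ι → E) :
    ∑ i, ∑ j, ‖f i - f j‖ ^ 2 = 2 * (Fintype.card ι * ∑ i, ‖f i‖ ^ 2 - ‖∑ i, f i‖ ^ 2) := by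
  simp only [norm_sub_sq_real, Finset.sum_add_distrib, Finset.sum_sub_distrib, ← Finset.mul_sum,
    norm_sum_sq_eq_sum_sum_inner, Finset.sum_const, Finset.card_univ, nsmul_eq_mul]
  ring

lemma sum_sum_Ioi_norm_sub_sq {ι E : Type*} [LinearOrder ι] [Fintype ι] [LocallyFiniteOrderTop ι]
    [LocallyFiniteOrderBot ι] [NormedAddCommGroup E] [InnerProductSpace ℝ E] (f : ι → E) :
    ∑ i, ∑ j ∈ Finset.Ioi i, ‖f i - f j‖ ^ 2
      = Fintype.card ι * ∑ i, ‖f i‖ ^ 2 - ‖∑ i, f i‖ ^ 2 := by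
  have hdouble : 2 * ∑ i, ∑ j ∈ Finset.Ioi i, ‖f i - f j‖ ^ 2 = ∑ i, ∑ j, ‖f i - f j‖ ^ 2 :=
    calc 2 * ∑ i, ∑ j ∈ Finset.Ioi i, ‖f i - f j‖ ^ 2
        = ∑ i, ∑ j ∈ Finset.Ioi i, (‖f j - f i‖ ^ 2 + ‖f i - f j‖ ^ 2) := by
          simp only [Finset.mul_sum, two_mul]
          exact Finset.sum_congr rfl fun i _ => Finset.sum_congr rfl fun j _ => by
            rw [norm_sub_rev (f j)]
      _ = ∑ i, ∑ j ∈ {i}ᶜ, ‖f j - f i‖ ^ 2 := Finset.sum_sum_Ioi_add_eq_sum_sum_off_diag _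
      _ = ∑ i, ∑ j, ‖f i - f j‖ ^ 2 := by
          refine Finset.sum_congr rfl fun i _ => ?_
          rw [Fintype.sum_eq_add_sum_compl i]
          simp [norm_sub_rev]
  linarith [sum_sum_norm_sub_sq f]

lemma cwN_eq (d N : ℕ) (x : Fin N → Euc d) :
    cwN d N x = ‖∑ i, x i‖ ^ 2 - N * ∑ i, ‖x i‖ ^ 2 := by
  rw [cwN, sum_sum_Ioi_norm_sub_sq, Fintype.card_fin]
  ring

lemma continuous_cwN (d N : ℕ) : Continuous (cwN d N) := by
  unfold cwN
  fun_prop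

def alternatingMap {E : Type*} [Neg E] (N : ℕ) (x : E) : Fin N → E :=
  fun i => if (i : ℕ) % 2 = 0 then x else -x

lemma alternatingPlan_eq_map (d N : ℕ) (μ : Measure (Euc d)) :
    alternatingPlan d N μ = μ.map (alternatingMap N) := rfl

lemma measurable_alternatingMap {E : Type*} [MeasurableSpace E] [Neg E] [MeasurableNeg E] (N : ℕ) :
    Measurable (alternatingMap (E := E) N) :=
  measurable_pi_lambda _ fun i => by
    unfold alternatingMap
    split_ifs
    exacts [measurable_id, measurable_neg]

lemma norm_alternatingMap {E : Type*} [SeminormedAddCommGroup E] {N : ℕ} (x : E) (i : Fin N) :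
    ‖alternatingMap N x i‖ = ‖x‖ := by
  unfold alternatingMap
  split_ifs <;> simp

lemma sum_alternatingMap {E : Type*} [AddCommGroup E] {N : ℕ} (hN : Even N) (x : E) :
    ∑ i, alternatingMap N x i = 0 := by
  obtain ⟨m, rfl⟩ := hN
  unfold alternatingMap
  rw [← two_mul, Fin.sum_univ_eq_sum_range (fun i => if i % 2 = 0 then x else -x)]
  induction m with
  | zero => simp
  | succ m ih =>
    rw [show 2 * (m + 1) = 2 * m + 1 + 1 by ring, Finset.sum_range_succ, Finset.sum_range_succ, ih]
    simp

lemma cwN_alternatingMap (d : ℕ) {N : ℕ} (hN : Even N) (x : Euc d) :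
    cwN d N (alternatingMap N x) = -(N ^ 2 * ‖x‖ ^ 2) := by
  simp only [cwN_eq, sum_alternatingMap hN, norm_zero, norm_alternatingMap, Finset.sum_const,
    Finset.card_univ, Fintype.card_fin, nsmul_eq_mul]
  ring

lemma map_withDensity_eq_self {α : Type*} [MeasurableSpace α] {μ : Measure α} {e : α → α}
    {ρ : α → ENNReal} (he : Measurable e) (hμ : μ.map e = μ) (hρ : Measurable ρ)
    (hρe : ∀ x, ρ (e x) = ρ x) :
    (μ.withDensity ρ).map e = μ.withDensity ρ := by
  ext s hs
  rw [Measure.map_apply he hs, withDensity_apply _ (he hs), withDensity_apply _ hs]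
  conv_rhs => rw [← hμ, setLIntegral_map hs hρ he]
  simp only [hρe]

lemma map_alternatingPlan_apply {d N : ℕ} {μ : Measure (Euc d)} (hμ : μ.map Neg.neg = μ)
    (i : Fin N) : (alternatingPlan d N μ).map (fun x => x i) = μ := by
  rw [alternatingPlan_eq_map, Measure.map_map (measurable_pi_apply i) (measurable_alternatingMap N)]
  change μ.map (fun x => if (i : ℕ) % 2 = 0 then x else -x) = μ
  split_ifs
  exacts [Measure.map_id, hμ]

lemma alternatingPlan_mem_GammaN {d N : ℕ} {μ : Measure (Euc d)} [IsProbabilityMeasure μ]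
    (hμ : μ.map Neg.neg = μ) : alternatingPlan d N μ ∈ GammaN d N μ :=
  ⟨Measure.isProbabilityMeasure_map (measurable_alternatingMap N).aemeasurable,
    map_alternatingPlan_apply hμ⟩

lemma integral_cwN_alternatingPlan {d N : ℕ} (hN : Even N) (μ : Measure (Euc d)) :
    ∫ x, cwN d N x ∂(alternatingPlan d N μ) = -(N ^ 2 * ∫ x, ‖x‖ ^ 2 ∂μ) := by
  rw [alternatingPlan_eq_map, integral_map (measurable_alternatingMap N).aemeasurable
    (continuous_cwN d N).aestronglyMeasurable]
  simp only [cwN_alternatingMap d hN, integral_neg, integral_const_mul]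

/-- If `f` is not integrable its integral is the junk value `0`, which `g ≤ 0` still undercuts. -/
lemma integral_le_integral_of_le_of_nonpos {α : Type*} [MeasurableSpace α] {μ : Measure α}
    {f g : α → ℝ} (hg : Integrable g μ) (hg0 : g ≤ᵐ[μ] 0) (hgf : g ≤ᵐ[μ] f) :
    ∫ x, g x ∂μ ≤ ∫ x, f x ∂μ := by
  by_cases hf : Integrable f μ
  · exact integral_mono_ae hg hf hgf
  · rw [integral_undef hf]
    exact integral_nonpos_of_ae hg0

section Marginals

variable {d N : ℕ} {μ : Measure (Euc d)} {γ : Measure (Fin N → Euc d)}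

lemma integrable_norm_sq_apply (hγ : ∀ i, γ.map (fun x => x i) = μ)
    (hmom : Integrable (fun x => ‖x‖ ^ 2) μ) (i : Fin N) :
    Integrable (fun x => ‖x i‖ ^ 2) γ := by
  rw [← hγ i] at hmom
  exact (integrable_map_measure (continuous_norm.pow 2).aestronglyMeasurable
    (measurable_pi_apply i).aemeasurable).mp hmom

lemma integral_norm_sq_apply (hγ : ∀ i, γ.map (fun x => x i) = μ) (i : Fin N) :
    ∫ x, ‖x i‖ ^ 2 ∂γ = ∫ x, ‖x‖ ^ 2 ∂μ := by
  rw [← hγ i]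
  exact (integral_map (measurable_pi_apply i).aemeasurable
    (continuous_norm.pow 2).aestronglyMeasurable).symm

lemma neg_sq_mul_integral_norm_sq_le_integral_cwN (hγ : ∀ i, γ.map (fun x => x i) = μ)
    (hmom : Integrable (fun x => ‖x‖ ^ 2) μ) :
    -(N ^ 2 * ∫ x, ‖x‖ ^ 2 ∂μ) ≤ ∫ x, cwN d N x ∂γ := by
  have hint := integrable_norm_sq_apply hγ hmom
  have hbound : ∫ x, -(N * ∑ i, ‖x i‖ ^ 2) ∂γ = -(N ^ 2 * ∫ x, ‖x‖ ^ 2 ∂μ) := by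
    simp only [integral_neg, integral_const_mul, integral_finsetSum _ fun i _ => hint i,
      integral_norm_sq_apply hγ, Finset.sum_const, Finset.card_univ, Fintype.card_fin,
      nsmul_eq_mul]
    ring
  rw [← hbound]
  refine integral_le_integral_of_le_of_nonpos
    ((integrable_finsetSum _ fun i _ => hint i).const_mul _).neg
    (ae_of_all _ fun x => ?_) (ae_of_all _ fun x => ?_)
  · simp only [Pi.zero_apply, neg_nonpos]
    positivity
  · rw [cwN_eq]
    linarith [sq_nonneg ‖∑ i, x i‖]

end Marginals

theorem alternating_plan_optimal_even_general
    (d m : ℕ) (ρ : Euc d → ENNReal) (hρ : Measurable ρ)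
    (hsymm : ∀ x : Euc d, ρ (-x) = ρ x)
    (hprob : IsProbabilityMeasure (volume.withDensity ρ))
    (hmom : Integrable (fun x => ‖x‖ ^ 2) (volume.withDensity ρ)) :
    alternatingPlan d (2 * m) (volume.withDensity ρ) ∈ GammaN d (2 * m) (volume.withDensity ρ) ∧
    ∀ γ ∈ GammaN d (2 * m) (volume.withDensity ρ),
      ∫ x, cwN d (2 * m) x ∂(alternatingPlan d (2 * m) (volume.withDensity ρ)) ≤
        ∫ x, cwN d (2 * m) x ∂γ := by
  have hneg : (volume.withDensity ρ).map Neg.neg = volume.withDensity ρ :=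
    map_withDensity_eq_self measurable_neg (Measure.map_neg_eq_self volume) hρ hsymm
  refine ⟨alternatingPlan_mem_GammaN hneg, fun γ hγ => ?_⟩
  rw [integral_cwN_alternatingPlan (even_two_mul m)]
  exact neg_sq_mul_integral_norm_sq_le_integral_cwN hγ.2 hmom

theorem alternating_plan_optimal_even
    (d m : ℕ) (hm : 1 ≤ m) (ρ : Euc d → ENNReal) (hρ : Measurable ρ)
    (hsymm : ∀ x : Euc d, ρ (-x) = ρ x)
    (hprob : IsProbabilityMeasure (volume.withDensity ρ))
    (hmom : Integrable (fun x => ‖x‖ ^ 2) (volume.withDensity ρ)) :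
    alternatingPlan d (2 * m) (volume.withDensity ρ) ∈ GammaN d (2 * m) (volume.withDensity ρ) ∧
    ∀ γ ∈ GammaN d (2 * m) (volume.withDensity ρ),
      ∫ x, cwN d (2 * m) x ∂(alternatingPlan d (2 * m) (volume.withDensity ρ)) ≤
        ∫ x, cwN d (2 * m) x ∂γ :=
  alternating_plan_optimal_even_general d m ρ hρ hsymm hprob hmom

end
end

section
/- Fix N ≥ 3. For z ∈ [0,1) let z = Σ_{k≥1} a_k N^{−k} with digits a_k ∈ {0,…,N−1} be the base-N expansion that is not eventually equal to N−1, and define T(z) = Σ_{k≥1} S(a_k) N^{−k}, where S(i) = i + 1 for i ∈ {0,…,N−2} and S(N−1) = 0. Then T pushes Lebesgue measure on [0,1) forward to itself, and z + T(z) + T²(z) + ⋯ + T^{N−1}(z) = N/2 for Lebesgue-almost every z ∈ [0,1). -/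
open MeasureTheory

noncomputable section

/-- The `k`-th digit (for `k ≥ 1`) of the base-`N` expansion of `z` that is not eventually
equal to `N − 1`: `a_k = ⌊z·N^k⌋ mod N`. -/
def digit (N : ℕ) (z : ℝ) (k : ℕ) : ℤ := ⌊z * (N : ℝ) ^ k⌋ % N

/-- The base-`N` digit-cycling map `T(z) = Σ_k S(a_k) N^{−k}`, where `S(i) = i + 1 mod N`
(i.e. `S(i) = i + 1` for `i < N − 1` and `S(N−1) = 0`). -/
def Tmap (N : ℕ) (z : ℝ) : ℝ :=
  ∑' k : ℕ, (((digit N z (k + 1) + 1) % N : ℤ) : ℝ) / (N : ℝ) ^ (k + 1)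

/-!
In base `N`, `Tmap N` adds `1` modulo `N` to every digit. The digit map sends Lebesgue measure on
`[0, 1)` to the uniform product measure on `ℕ → Fin N`, which is invariant under adding `1`
coordinatewise, and `Real.ofDigits` inverts the digit map; hence `Tmap N` preserves Lebesgue
measure. Off the countable set of points whose digits are eventually constant, the digits of
`T^j z` are those of `z` increased by `j` modulo `N`, so in every place the digits of
`z, T z, …, T^{N-1} z` run through `0, 1, …, N - 1` once, and the sum is
`N (N - 1) / 2 · ∑_{k ≥ 1} N^{-k} = N / 2`.
-/

open Filter Finset ProbabilityTheory Fin.NatCast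

theorem Filter.frequently_ne_of_not_eventuallyConst {α β : Type*} {l : Filter α} {f : α → β}
    (hf : ¬EventuallyConst f l) (c : β) : ∃ᶠ x in l, f x ≠ c := fun h =>
  hf ((EventuallyConst.const c).congr (h.mono fun _ hx => (not_not.mp hx).symm))

theorem countable_setOf_eventuallyConst {β : Type*} [Countable β] :
    {u : ℕ → β | EventuallyConst u atTop}.Countable := by
  have hsub : {u : ℕ → β | EventuallyConst u atTop} ⊆
      ⋃ n, Set.range fun p : (Fin n → β) × β =>
        fun k => if h : k < n then p.1 ⟨k, h⟩ else p.2 := by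
    intro u hu
    obtain ⟨n, hn⟩ := eventuallyConst_atTop.mp hu
    refine Set.mem_iUnion.mpr ⟨n, (fun k => u k, u n), funext fun k => ?_⟩
    by_cases hk : k < n
    · simp [hk]
    · simp [hk, hn k (not_lt.mp hk)]
  exact (Set.countable_iUnion fun n => Set.countable_range _).mono hsub

theorem Fin.sum_range_val_add_natCast {n : ℕ} [NeZero n] (a : Fin n) :
    ∑ j ∈ range n, ((a + (j : Fin n) : Fin n) : ℕ) = ∑ j ∈ range n, j := by
  rw [← Fin.sum_univ_eq_sum_range (fun j => ((a + (j : Fin n) : Fin n) : ℕ)),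
    ← Fin.sum_univ_eq_sum_range (fun j => j)]
  simp only [Fin.cast_val_eq_self]
  exact Equiv.sum_comp (Equiv.addLeft a) (fun i : Fin n => (i : ℕ))

theorem MeasureTheory.Measure.le_of_forall_measure_singleton_le {α : Type*} [MeasurableSpace α]
    [Finite α] [MeasurableSingletonClass α] {μ ν : Measure α} (h : ∀ a, μ {a} ≤ ν {a}) :
    μ ≤ ν := by
  refine Measure.le_iff'.mpr fun s => ?_
  have := Fintype.ofFinite α
  classical
  rw [← s.coe_toFinset, ← sum_measure_singleton, ← sum_measure_singleton]
  exact sum_le_sum fun a _ => h a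

theorem ProbabilityTheory.measurePreserving_add_const_uniformOn_univ {G : Type*} [AddGroup G]
    [Fintype G] [MeasurableSpace G] [MeasurableSingletonClass G] (c : G) :
    MeasurePreserving (· + c) (uniformOn (Set.univ : Set G)) (uniformOn Set.univ) := by
  refine ⟨.of_discrete, Measure.ext_of_singleton fun a => ?_⟩
  rw [Measure.map_apply .of_discrete (measurableSet_singleton a), Set.preimage_add_right_singleton]
  simp [uniformOn_univ]

theorem ProbabilityTheory.measurePreserving_add_const_infinitePi_uniformOn_univ {ι G : Type*}
    [AddGroup G] [Fintype G] [MeasurableSpace G] [MeasurableSingletonClass G] (c : G) :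
    MeasurePreserving (fun (g : ι → G) i => g i + c)
      (Measure.infinitePi fun _ => uniformOn Set.univ)
      (Measure.infinitePi fun _ => uniformOn Set.univ) := by
  refine ⟨measurable_pi_lambda _ fun i =>
    (Measurable.of_discrete (f := (· + c))).comp (measurable_pi_apply i), ?_⟩
  rw [Measure.infinitePi_map_pi (f := fun _ g => g + c) _ fun _ => .of_discrete]
  simp only [(measurePreserving_add_const_uniformOn_univ c).map_eq]

instance : IsProbabilityMeasure (volume.restrict (Set.Ico (0 : ℝ) 1)) :=
  ⟨by simp⟩

namespace Real

variable {b : ℕ}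

theorem ofDigits_lt_one {d : ℕ → Fin b} {k : ℕ} (hk : (d k : ℕ) + 1 < b) :
    ofDigits d < 1 := by
  rw [← ofDigits_const_last_eq_one' (by omega : 1 < b)]
  refine Summable.tsum_lt_tsum (i := k) (fun i => ?_) ?_ summable_ofDigitsTerm
    summable_ofDigitsTerm
  · have := (d i).isLt
    simp only [ofDigitsTerm]
    gcongr
    exact_mod_cast (by omega : (d i : ℕ) ≤ b - 1)
  · simp only [ofDigitsTerm]
    exact mul_lt_mul_of_pos_right (by exact_mod_cast (by omega : (d k : ℕ) < b - 1))
      (inv_pos.mpr (pow_pos (by exact_mod_cast (by omega : 0 < b)) _))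

theorem pow_mul_sum_ofDigitsTerm_succ (d : ℕ → Fin b) (n : ℕ) :
    (b : ℝ) ^ (n + 1) * ∑ i ∈ range (n + 1), ofDigitsTerm d i =
      b * ((b : ℝ) ^ n * ∑ i ∈ range n, ofDigitsTerm d i) + d n := by
  have : (b : ℝ) ≠ 0 := by exact_mod_cast (Fin.pos (d 0)).ne'
  rw [sum_range_succ, ofDigitsTerm]
  field_simp
  ring

theorem exists_natCast_eq_pow_mul_sum_ofDigitsTerm (d : ℕ → Fin b) (n : ℕ) :
    ∃ m : ℕ, (b : ℝ) ^ n * ∑ i ∈ range n, ofDigitsTerm d i = m := by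
  induction n with
  | zero => exact ⟨0, by simp⟩
  | succ n ih =>
    obtain ⟨m, hm⟩ := ih
    exact ⟨b * m + d n, by rw [pow_mul_sum_ofDigitsTerm_succ, hm]; push_cast; ring⟩

variable [NeZero b]

theorem digits_ofDigits {d : ℕ → Fin b} (hd : ∃ᶠ k in atTop, (d k : ℕ) + 1 < b) :
    digits (ofDigits d) b = d := by
  funext k
  obtain ⟨m, hm⟩ := exists_natCast_eq_pow_mul_sum_ofDigitsTerm d k
  obtain ⟨j, hjk, hj⟩ := frequently_atTop.mp hd (k + 1)
  set tail := ofDigits fun i => d (i + (k + 1))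
  have htail : tail < 1 := ofDigits_lt_one (k := j - (k + 1)) (by rwa [Nat.sub_add_cancel hjk])
  have hsplit : ofDigits d * b ^ (k + 1) = (b * m + d k : ℕ) + tail := by
    have : (b : ℝ) ^ (k + 1) ≠ 0 := pow_ne_zero _ (by exact_mod_cast NeZero.ne b)
    rw [ofDigits_eq_sum_add_ofDigits d (k + 1), add_mul, mul_comm, pow_mul_sum_ofDigitsTerm_succ,
      hm]
    field_simp
    push_cast
    ring
  have hfloor : ⌊ofDigits d * b ^ (k + 1)⌋₊ = b * m + d k := by
    rw [Nat.floor_eq_iff (mul_nonneg (ofDigits_nonneg d) (by positivity)), hsplit]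
    constructor <;> linarith [ofDigits_nonneg fun i => d (i + (k + 1))]
  ext
  rw [digits, hfloor, Fin.val_ofNat, Nat.mul_add_mod_self_left, Nat.mod_eq_of_lt (d k).isLt]

theorem sum_ofDigits_add_natCast (hb : 1 < b) (d : ℕ → Fin b) :
    ∑ j ∈ range b, ofDigits (fun k => d k + (j : Fin b)) = b / 2 := by
  have hterm : ∀ k, ∑ j ∈ range b, ofDigitsTerm (fun k => d k + (j : Fin b)) k =
      b / 2 * ofDigitsTerm (fun _ => (⟨b - 1, by omega⟩ : Fin b)) k := by
    intro k
    have hgauss : ((∑ j ∈ range b, j : ℕ) : ℝ) * 2 = b * (b - 1 : ℕ) := by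
      exact_mod_cast sum_range_id_mul_two b
    simp only [ofDigitsTerm, ← sum_mul, ← mul_assoc, ← Nat.cast_sum,
      Fin.sum_range_val_add_natCast]
    congr 1
    linarith
  simp only [ofDigits]
  rw [← Summable.tsum_finsetSum fun j _ => summable_ofDigitsTerm, tsum_congr hterm, tsum_mul_left,
    ← ofDigits, ofDigits_const_last_eq_one' hb, mul_one]

theorem measurable_digits : Measurable fun x : ℝ => digits x b :=
  measurable_pi_lambda _ fun _ =>
    measurable_from_top.comp (Nat.measurable_floor.comp (measurable_id.mul_const _))

theorem volume_digits_cylinder_le (d : ℕ → Fin b) (n : ℕ) :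
    volume {x ∈ Set.Ico (0 : ℝ) 1 | ∀ i < n, digits x b i = d i} ≤
      ((b : ENNReal) ^ n)⁻¹ := by
  set q := ∑ i ∈ range n, ofDigitsTerm d i
  have hbn : (0 : ℝ) < (b : ℝ) ^ n := pow_pos (by exact_mod_cast NeZero.pos b) n
  have hsub : {x ∈ Set.Ico (0 : ℝ) 1 | ∀ i < n, digits x b i = d i} ⊆
      Set.Ico q (q + ((b : ℝ) ^ n)⁻¹) := by
    rintro x ⟨hx, hxd⟩
    have hq : (b : ℝ) ^ n * q = ⌊(b : ℝ) ^ n * x⌋₊ := by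
      rw [← ofDigits_digits_sum_eq hx n]
      congr 1
      exact sum_congr rfl fun i hi => by rw [ofDigitsTerm, ofDigitsTerm, hxd i (mem_range.mp hi)]
    have h1 := Nat.floor_le (mul_nonneg hbn.le hx.1)
    have h2 := Nat.lt_floor_add_one ((b : ℝ) ^ n * x)
    rw [← hq] at h1 h2
    constructor
    · exact le_of_mul_le_mul_left h1 hbn
    · rw [← mul_lt_mul_iff_right₀ hbn, mul_add, mul_inv_cancel₀ hbn.ne']
      exact h2
  calc _ ≤ volume (Set.Ico q (q + ((b : ℝ) ^ n)⁻¹)) := measure_mono hsub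
    _ = ((b : ENNReal) ^ n)⁻¹ := by
      rw [Real.volume_Ico, add_sub_cancel_left, ENNReal.ofReal_inv_of_pos hbn,
        ENNReal.ofReal_pow (Nat.cast_nonneg _), ENNReal.ofReal_natCast]

/-- Each cylinder has measure at most `b^{-(a+1)}`, its mass under the product measure; both
sides being probability measures, they agree. -/
theorem map_restrict_digits_eq_pi (a : ℕ) :
    (volume.restrict (Set.Ico (0 : ℝ) 1)).map (fun x => (Iic a).restrict (digits x b)) =
      Measure.pi fun _ => uniformOn Set.univ := by
  have hmeas : Measurable fun x : ℝ => (Iic a).restrict (digits x b) :=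
    (Finset.measurable_restrict _).comp measurable_digits
  have : IsProbabilityMeasure
      ((volume.restrict (Set.Ico (0 : ℝ) 1)).map fun x => (Iic a).restrict (digits x b)) :=
    Measure.isProbabilityMeasure_map hmeas.aemeasurable
  refine Measure.eq_of_le_of_measure_univ_eq
    (Measure.le_of_forall_measure_singleton_le fun c => ?_) (by simp)
  let d : ℕ → Fin b := fun i => if h : i ∈ Iic a then c ⟨i, h⟩ else 0
  calc _ = volume ({x | (Iic a).restrict (digits x b) = c} ∩ Set.Ico 0 1) := by
        rw [Measure.map_apply hmeas (measurableSet_singleton c),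
          Measure.restrict_apply (hmeas (measurableSet_singleton c))]
        rfl
    _ ≤ volume {x ∈ Set.Ico (0 : ℝ) 1 | ∀ i < a + 1, digits x b i = d i} := by
        refine measure_mono fun x ⟨hxc, hx⟩ => ⟨hx, fun i hi => ?_⟩
        have hia : i ∈ Iic a := mem_Iic.mpr (Nat.lt_succ_iff.mp hi)
        simp only [d, dif_pos hia, ← hxc.out]
        rfl
    _ ≤ ((b : ENNReal) ^ (a + 1))⁻¹ := volume_digits_cylinder_le d (a + 1)
    _ = _ := by simp [uniformOn_univ, Measure.pi_singleton, ENNReal.inv_pow]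

theorem measurePreserving_digits :
    MeasurePreserving (fun x : ℝ => digits x b) (volume.restrict (Set.Ico 0 1))
      (Measure.infinitePi fun _ => uniformOn Set.univ) := by
  refine ⟨measurable_digits, ext_of_generate_finite _ generateFrom_measurableCylinders.symm
    isPiSystem_measurableCylinders (fun s hs => ?_)
    (by rw [Measure.map_apply measurable_digits .univ]; simp)⟩
  simp only [measurableCylinders_nat, Set.mem_iUnion, Set.mem_singleton_iff] at hs
  obtain ⟨a, S, hS, rfl⟩ := hs
  rw [cylinder, ← Measure.map_apply (measurable_restrict _) hS,
    ← Measure.map_apply (measurable_restrict _) hS, Measure.infinitePi_map_restrict,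
    Measure.map_map (measurable_restrict _) measurable_digits]
  exact congrArg (· S) (map_restrict_digits_eq_pi a)

theorem measurePreserving_ofDigits (hb : 1 < b) :
    MeasurePreserving (ofDigits (b := b)) (Measure.infinitePi fun _ => uniformOn Set.univ)
      (volume.restrict (Set.Ico 0 1)) := by
  refine ⟨continuous_ofDigits.measurable, ?_⟩
  rw [← measurePreserving_digits.map_eq, Measure.map_map continuous_ofDigits.measurable
    measurable_digits]
  conv_rhs => rw [← Measure.map_id (μ := volume.restrict (Set.Ico (0 : ℝ) 1))]
  refine Measure.map_congr ?_
  filter_upwards [ae_restrict_mem measurableSet_Ico] with x hx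
  exact ofDigits_digits hb hx

theorem ae_not_eventuallyConst_digits (hb : 1 < b) :
    ∀ᵐ x ∂volume.restrict (Set.Ico (0 : ℝ) 1), ¬EventuallyConst (digits x b) atTop := by
  rw [ae_restrict_iff' measurableSet_Ico, ae_iff]
  refine measure_mono_null (fun x hx => ?_)
    ((countable_setOf_eventuallyConst.image (ofDigits (b := b))).measure_zero volume)
  simp only [Classical.not_imp, not_not] at hx
  exact ⟨digits x b, hx.2, ofDigits_digits hb hx.1⟩

end Real

open Real

section

variable {N : ℕ} [NeZero N]

theorem digit_succ_eq_digits {z : ℝ} (hz : 0 ≤ z) (k : ℕ) :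
    digit N z (k + 1) = ((digits z N k : ℕ) : ℤ) := by
  rw [digit, digits, Fin.val_ofNat, Int.natCast_mod,
    Int.natCast_floor_eq_floor (mul_nonneg hz (by positivity))]

theorem Tmap_eq_ofDigits {z : ℝ} (hz : 0 ≤ z) :
    Tmap N z = ofDigits fun k => digits z N k + 1 := by
  refine tsum_congr fun k => ?_
  rw [ofDigitsTerm, digit_succ_eq_digits hz, Fin.val_add, Fin.val_one', Nat.add_mod_mod,
    div_eq_mul_inv]
  norm_cast

theorem iterate_Tmap_eq_ofDigits (hN : 1 < N) {z : ℝ} (hz : z ∈ Set.Ico 0 1)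
    (hd : ¬EventuallyConst (digits z N) atTop) (j : ℕ) :
    (Tmap N)^[j] z = ofDigits fun k => digits z N k + (j : Fin N) := by
  induction j with
  | zero => simpa using (ofDigits_digits hN hz).symm
  | succ j ih =>
    have hdj : ¬EventuallyConst (fun k => digits z N k + j) atTop := fun h =>
      hd (by simpa [Function.comp_def] using h.comp (· - (j : Fin N)))
    have hnd : ∃ᶠ k in atTop, ((digits z N k + j : Fin N) : ℕ) + 1 < N :=
      (frequently_ne_of_not_eventuallyConst hdj ⟨N - 1, by omega⟩).mono fun k hk => by
        have := (digits z N k + j).isLt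
        have : ((digits z N k + j : Fin N) : ℕ) ≠ N - 1 := fun h => hk (Fin.ext h)
        omega
    rw [Function.iterate_succ_apply', ih, Tmap_eq_ofDigits (ofDigits_nonneg _),
      digits_ofDigits hnd]
    simp [add_assoc]

end

theorem digit_cycling_measure_preserving_and_sum
    (N : ℕ) (hN : 3 ≤ N) :
    (volume.restrict (Set.Ico (0 : ℝ) 1)).map (Tmap N) =
      volume.restrict (Set.Ico (0 : ℝ) 1) ∧
    ∀ᵐ z ∂(volume.restrict (Set.Ico (0 : ℝ) 1)),
      ∑ j ∈ Finset.range N, (Tmap N)^[j] z = N / 2 := by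
  have : NeZero N := ⟨by omega⟩
  have hN1 : 1 < N := by omega
  constructor
  · have hT : Tmap N =ᵐ[volume.restrict (Set.Ico 0 1)]
        ofDigits ∘ (fun d k => d k + 1) ∘ fun z => digits z N := by
      filter_upwards [ae_restrict_mem measurableSet_Ico] with z hz using Tmap_eq_ofDigits hz.1
    rw [Measure.map_congr hT]
    exact ((measurePreserving_ofDigits hN1).comp
      ((measurePreserving_add_const_infinitePi_uniformOn_univ 1).comp
        measurePreserving_digits)).map_eq
  · filter_upwards [ae_restrict_mem measurableSet_Ico, ae_not_eventuallyConst_digits hN1]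
      with z hz hd
    simp only [iterate_Tmap_eq_ofDigits hN1 hz hd]
    exact sum_ofDigits_add_natCast hN1 _

end
end
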